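/- Let b = −n+i with n ≥ 2 and let D ⊆ {0,...,n²} be separated (distinct digits differ in absolute value by more than 1). Fix a positive integer m. Then any two distinct m-tiles with digits in D are disjoint; that is, if (d_1,...,d_m) ≠ (d′_1,...,d′_m) are words over D, then (0.d_1⋯d_m + b^{−m}S) ∩ (0.d′_1⋯d′_m + b^{−m}S) = ∅, where S = C_{Λ_b} is the set of all sums ∑_{k≥1} e_k b^{−k} with e_k ∈ {0,...,n²}. -/

import Mathlib

open Filter Topology

/-- The `m`-tile `0.d₁⋯d_m + b^{-m}S` in base `b = -n+i`: all base-`b`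
fractional expansions whose first `m` digits are given by `w`, with the
remaining digits arbitrary in `{0,…,n²}`. -/
noncomputable def tile (n m : ℕ) (w : Fin m → ℕ) : Set ℂ :=
  {z | ∃ a : ℕ → ℕ, (∀ k, a k ≤ n ^ 2) ∧ (∀ i : Fin m, a i = w i) ∧
    z = ∑' k : ℕ, (a k : ℂ) * (-(n : ℂ) + Complex.I) ^ (-(k + 1 : ℤ))}

lemma key_int (n δ x y u v : ℤ) (hn : 2 ≤ n) (hδ : 2 ≤ δ)
    (he : |n*δ + x| ≤ n^2)
    (h1 : x^2 + δ^2 ≤ n^2+2*n+3)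
    (h2 : y^2 + (x - n*δ)^2 ≤ n^2+2*n+3)
    (h3 : u^2 + v^2 ≤ n^2+2*n+3)
    (hv : v = y - n*(x - n*δ)) : False := by
  have hx2 : x^2 ≤ n^2+2*n-1 := by nlinarith
  have hxle : x ≤ n := by
    by_contra h
    push_neg at h
    have h' : n+1 ≤ x := h
    have := mul_self_le_mul_self (by linarith : (0:ℤ) ≤ n+1) h'
    nlinarith
  have h2a : (n*δ - x)^2 ≤ n^2+2*n+3 := by nlinarith
  have hbx : n*δ - x ≤ n+1 := by
    by_contra h
    push_neg at h
    have h' : n+2 ≤ n*δ - x := by omega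
    have := mul_self_le_mul_self (by linarith : (0:ℤ) ≤ n+2) h'
    nlinarith
  have hδ2 : δ = 2 := by
    rcases le_or_gt 3 δ with h3d | h3d
    · have : 3*n ≤ n*δ := by nlinarith
      omega
    · omega
  subst hδ2
  have hxge : n - 1 ≤ x := by linarith
  rcases eq_or_lt_of_le hn with h2n | h3n
  · -- n = 2
    subst h2n
    rw [abs_le] at he
    omega
  · -- n ≥ 3
    have h3n : 3 ≤ n := h3n
    have hu : 0 ≤ u^2 := sq_nonneg u
    have hnn : 3*n ≤ n^2 := by nlinarith
    rcases eq_or_lt_of_le hxge with hxeq | hxlt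
    · -- x = n - 1
      rw [← hxeq] at h2
      have e1 : (n-1 - n*2)^2 = n^2+2*n+1 := by ring
      have hy2 : y^2 ≤ 2 := by linarith only [h2, e1]
      have hy1 : -1 ≤ y := by
        by_contra h
        push_neg at h
        have h' : (2:ℤ) ≤ -y := by omega
        have h'' := mul_self_le_mul_self (by norm_num : (0:ℤ) ≤ 2) h'
        have e : (-y)*(-y) = y^2 := by ring
        linarith only [h'', e, hy2]
      have hvv : v = y + (n^2 + n) := by rw [hv, ← hxeq]; ring
      have hvge : n + 2 ≤ v := by linarith only [hvv, hy1, hnn, h3n]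
      have hsq : (n+2)*(n+2) ≤ v*v :=
        mul_self_le_mul_self (by linarith : (0:ℤ) ≤ n+2) hvge
      have e2 : (n+2)*(n+2) = n^2+4*n+4 := by ring
      have e3 : v*v = v^2 := by ring
      linarith only [hsq, e2, e3, h3, hu, h3n]
    · -- x = n
      have hxn : x = n := by omega
      rw [hxn] at h2
      have e1 : (n - n*2)^2 = n^2 := by ring
      have hy2 : y^2 ≤ 2*n+3 := by linarith only [h2, e1]
      have hyn : -n ≤ y := by
        by_contra h
        push_neg at h
        have h' : n+1 ≤ -y := by omega
        have h'' := mul_self_le_mul_self (by linarith : (0:ℤ) ≤ n+1) h'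
        have e : (-y)*(-y) = y^2 := by ring
        have e' : (n+1)*(n+1) = n^2+2*n+1 := by ring
        linarith only [h'', e, e', hy2, hnn, h3n]
      have hvv : v = y + n^2 := by rw [hv, hxn]; ring
      have hvge : n + 2 ≤ v := by linarith only [hvv, hyn, hnn, h3n]
      have hsq : (n+2)*(n+2) ≤ v*v :=
        mul_self_le_mul_self (by linarith : (0:ℤ) ≤ n+2) hvge
      have e2 : (n+2)*(n+2) = n^2+4*n+4 := by ring
      have e3 : v*v = v^2 := by ring
      linarith only [hsq, e2, e3, h3, hu, h3n]

noncomputable def cc (n : ℕ) : ℝ := Real.sqrt ((n:ℝ)^2+1)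

lemma cc_sq (n : ℕ) : (cc n)^2 = (n:ℝ)^2+1 := Real.sq_sqrt (by positivity)

lemma cc_gt_one (n : ℕ) (hn : 1 ≤ n) : 1 < cc n := by
  have h1 : (1:ℝ) < (n:ℝ)^2 + 1 := by
    have : (1:ℝ) ≤ (n:ℝ) := by exact_mod_cast hn
    nlinarith
  have := Real.lt_sqrt (x := 1) (y := (n:ℝ)^2+1) (by norm_num)
  rw [cc]
  rw [this]
  norm_num
  positivity

lemma cc_le (n : ℕ) (hn : 1 ≤ n) : cc n ≤ (n:ℝ) + 1/2 := by
  have h1 : (1:ℝ) ≤ (n:ℝ) := by exact_mod_cast hn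
  have h2 : (n:ℝ)^2+1 ≤ ((n:ℝ)+1/2)^2 := by nlinarith
  calc cc n ≤ Real.sqrt (((n:ℝ)+1/2)^2) := Real.sqrt_le_sqrt h2
  _ = (n:ℝ)+1/2 := Real.sqrt_sq (by linarith)

lemma abs_bb (n : ℕ) : ‖(-(n:ℂ) + Complex.I)‖ = cc n := by
  rw [Complex.norm_def, Complex.normSq_apply, cc]
  norm_num
  ring_nf

lemma bb_ne (n : ℕ) (hn : 1 ≤ n) : (-(n:ℂ) + Complex.I) ≠ 0 := by
  intro h
  have := abs_bb n
  rw [h] at this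
  simp at this
  have := cc_gt_one n hn
  linarith

lemma norm_term (n : ℕ) (hn : 1 ≤ n) (g : ℂ) (k : ℕ) :
    ‖g * (-(n:ℂ) + Complex.I) ^ (-(k + 1 : ℤ))‖ = ‖g‖ * ((cc n)⁻¹)^(k+1) := by
  rw [norm_mul, norm_zpow]
  congr 1
  rw [abs_bb]
  rw [zpow_neg, ← inv_zpow]
  rw [show ((k:ℤ)+1) = ((k+1:ℕ):ℤ) by push_cast; ring, zpow_natCast]

lemma summable_gen (n : ℕ) (hn : 1 ≤ n) (g : ℕ → ℂ) (hg : ∀ k, ‖g k‖ ≤ (n:ℝ)^2) :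
    Summable (fun k => g k * (-(n:ℂ) + Complex.I) ^ (-(k + 1 : ℤ))) := by
  have hc1 := cc_gt_one n hn
  have hr0 : 0 ≤ (cc n)⁻¹ := by positivity
  have hr1 : (cc n)⁻¹ < 1 := by
    rw [inv_lt_one_iff₀]; right; exact hc1
  apply Summable.of_norm_bounded (g := fun k => (n:ℝ)^2 * ((cc n)⁻¹)^(k+1))
  · exact ((summable_geometric_of_lt_one hr0 hr1).mul_left _).comp_injective (add_left_injective 1)
  · intro k
    rw [norm_term n hn]
    have h1 : ((cc n)⁻¹)^(k+1) ≥ 0 := by positivity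
    exact mul_le_mul_of_nonneg_right (hg k) h1

lemma tail_norm (n : ℕ) (hn : 1 ≤ n) (g : ℕ → ℂ) (hg : ∀ k, ‖g k‖ ≤ (n:ℝ)^2) :
    ‖∑' k : ℕ, g k * (-(n:ℂ) + Complex.I) ^ (-(k + 1 : ℤ))‖ ≤ cc n + 1 := by
  have hc1 := cc_gt_one n hn
  have hr0 : 0 ≤ (cc n)⁻¹ := by positivity
  have hr1 : (cc n)⁻¹ < 1 := by rw [inv_lt_one_iff₀]; right; exact hc1
  have hgeom : HasSum (fun k : ℕ => (n:ℝ)^2 * ((cc n)⁻¹)^(k+1)) (cc n + 1) := by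
    have h0 := hasSum_geometric_of_lt_one hr0 hr1
    have h1 := (h0.mul_right ((cc n)⁻¹)).mul_left ((n:ℝ)^2)
    have he : ∀ k : ℕ, (n:ℝ)^2 * (((cc n)⁻¹)^k * (cc n)⁻¹) = (n:ℝ)^2 * ((cc n)⁻¹)^(k+1) := by
      intro k; rw [← pow_succ]
    rw [funext he] at h1
    suffices hv : cc n + 1 = (n:ℝ)^2 * ((1 - (cc n)⁻¹)⁻¹ * (cc n)⁻¹) by rw [hv]; exact h1
    have hc0 : cc n ≠ 0 := by linarith
    have hcm : cc n - 1 ≠ 0 := by intro h; apply hc0; linarith [sub_eq_zero.mp h]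
    have hn2 : (n:ℝ)^2 = (cc n)^2 - 1 := by rw [cc_sq]; ring
    rw [hn2]
    field_simp
    ring
  exact tsum_of_norm_bounded hgeom (fun k => by
    rw [norm_term n hn]
    have h := hg k
    have hp : (0:ℝ) ≤ ((cc n)⁻¹)^(k+1) := by positivity
    exact mul_le_mul_of_nonneg_right h hp)

lemma sq_bound (n : ℕ) (hn : 1 ≤ n) (p q : ℤ)
    (h : ‖(p:ℂ) + (q:ℂ) * Complex.I‖ ≤ cc n + 1) :
    p^2 + q^2 ≤ (n:ℤ)^2 + 2*n + 3 := by
  have hc1 := cc_gt_one n hn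
  have habs : ‖(p:ℂ) + (q:ℂ) * Complex.I‖ = Real.sqrt ((p:ℝ)^2 + (q:ℝ)^2) := by
    rw [show ((p:ℤ):ℂ) = (((p:ℤ):ℝ):ℂ) by push_cast; ring,
        show ((q:ℤ):ℂ) = (((q:ℤ):ℝ):ℂ) by push_cast; ring]
    exact Complex.norm_add_mul_I _ _
  rw [habs] at h
  have h0 : (0:ℝ) ≤ (p:ℝ)^2 + (q:ℝ)^2 := by positivity
  have hsq : (p:ℝ)^2 + (q:ℝ)^2 ≤ (cc n + 1)^2 := by
    calc (p:ℝ)^2 + (q:ℝ)^2 = (Real.sqrt ((p:ℝ)^2 + (q:ℝ)^2))^2 := (Real.sq_sqrt h0).symm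
    _ ≤ (cc n + 1)^2 := by
        apply pow_le_pow_left₀ (Real.sqrt_nonneg _) h
  have hcb : (cc n + 1)^2 ≤ (n:ℝ)^2 + 2*n + 3 := by
    have h1 := cc_le n hn
    have h2 := cc_sq n
    nlinarith
  have : (p:ℝ)^2 + (q:ℝ)^2 ≤ (n:ℝ)^2 + 2*n + 3 := le_trans hsq hcb
  exact_mod_cast this

lemma descent (n : ℕ) (hn : 2 ≤ n) (δ : ℤ) (hδ : 2 ≤ δ) (ε : ℕ → ℤ)
    (hε : ∀ k, |ε k| ≤ (n:ℤ)^2)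
    (heq : (δ:ℂ) = ∑' k : ℕ, (ε k : ℂ) * (-(n:ℂ) + Complex.I) ^ (-(k + 1 : ℤ))) :
    False := by
  have hn1 : 1 ≤ n := le_trans (by norm_num) hn
  have hb0 := bb_ne n hn1
  set b : ℂ := -(n:ℂ) + Complex.I with hbdef
  have hnorm : ∀ z : ℤ, |z| ≤ (n:ℤ)^2 → ‖((z:ℤ):ℂ)‖ ≤ (n:ℝ)^2 := by
    intro z hz
    rw [show ((z:ℤ):ℂ) = (((z:ℤ):ℝ):ℂ) by push_cast; ring, Complex.norm_real,
        Real.norm_eq_abs, ← Int.cast_abs]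
    exact_mod_cast hz
  set Tail : ℕ → ℂ := fun j => ∑' k : ℕ, (ε (k+j) : ℂ) * b^(-(k+1:ℤ)) with hTdef
  have hTs : ∀ j, Summable (fun k : ℕ => (ε (k+j):ℂ) * b^(-(k+1:ℤ))) :=
    fun j => summable_gen n hn1 _ (fun k => hnorm _ (hε _))
  have hTb : ∀ j, ‖Tail j‖ ≤ cc n + 1 :=
    fun j => tail_norm n hn1 _ (fun k => hnorm _ (hε _))
  have hrec : ∀ j, Tail (j+1) = b * Tail j - ε j := by
    intro j
    have hterm : ∀ k : ℕ, b * ((ε (k+j):ℂ) * b^(-(k+1:ℤ))) = (ε (k+j):ℂ) * b^(-(k:ℤ)) := by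
      intro k
      have hz : b * b^(-(k+1:ℤ)) = b^(-(k:ℤ)) := by
        rw [show b * b^(-(k+1:ℤ)) = b^(1:ℤ) * b^(-(k+1:ℤ)) by rw [zpow_one],
            ← zpow_add₀ hb0]
        congr 1; ring
      rw [show b * ((ε (k+j):ℂ) * b^(-(k+1:ℤ))) = (ε (k+j):ℂ) * (b * b^(-(k+1:ℤ))) by ring, hz]
    have h2 : Summable (fun k : ℕ => (ε (k+j):ℂ) * b^(-(k:ℤ))) :=
      ((hTs j).mul_left b).congr hterm
    have h1 : b * Tail j = ∑' k : ℕ, (ε (k+j):ℂ) * b^(-(k:ℤ)) := by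
      rw [hTdef]
      simp only []
      rw [← tsum_mul_left]
      exact tsum_congr hterm
    rw [Summable.tsum_eq_zero_add h2] at h1
    have h3 : ∑' k : ℕ, (ε (k+1+j):ℂ) * b^(-((k+1:ℕ):ℤ)) = Tail (j+1) := by
      apply tsum_congr
      intro k
      rw [show k+1+j = k+(j+1) by omega]
      norm_cast
    rw [h3] at h1
    simp only [Nat.zero_add, Nat.cast_zero, neg_zero, zpow_zero, mul_one] at h1
    rw [h1]; ring
  -- integer data
  obtain ⟨x, hx⟩ : ∃ x:ℤ, x = -(n:ℤ)*δ - ε 0 := ⟨_, rfl⟩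
  obtain ⟨y, hy⟩ : ∃ y:ℤ, y = -(n:ℤ)*x - δ - ε 1 := ⟨_, rfl⟩
  obtain ⟨u, hu⟩ : ∃ u:ℤ, u = -(n:ℤ)*y - (x - n*δ) - ε 2 := ⟨_, rfl⟩
  obtain ⟨v, hv⟩ : ∃ v:ℤ, v = y - (n:ℤ)*(x - n*δ) := ⟨_, rfl⟩
  have hT0 : Tail 0 = (δ:ℂ) := by
    rw [hTdef]
    simp only [Nat.add_zero]
    exact heq.symm
  have hT1 : Tail 1 = (x:ℂ) + (δ:ℂ)*Complex.I := by
    rw [hrec 0, hT0, hx, hbdef]; push_cast; ring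
  have hT2 : Tail 2 = (y:ℂ) + ((x - n*δ : ℤ):ℂ)*Complex.I := by
    rw [hrec 1, hT1, hy, hbdef]; push_cast
    linear_combination (δ:ℂ) * Complex.I_sq
  have hT3 : Tail 3 = (u:ℂ) + ((v : ℤ):ℂ)*Complex.I := by
    rw [hrec 2, hT2, hu, hv, hbdef]; push_cast
    linear_combination ((x:ℂ) - (n:ℂ)*(δ:ℂ)) * Complex.I_sq
  have h1 := sq_bound n hn1 x δ (hT1 ▸ hTb 1)
  have h2 := sq_bound n hn1 y (x - n*δ) (hT2 ▸ hTb 2)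
  have h3 := sq_bound n hn1 u v (hT3 ▸ hTb 3)
  have he : |(n:ℤ)*δ + x| ≤ (n:ℤ)^2 := by
    rw [show (n:ℤ)*δ + x = -(ε 0) by rw [hx]; ring, abs_neg]
    exact hε 0
  exact key_int n δ x y u v (by exact_mod_cast hn) hδ he h1 h2 h3 hv

/-- If `b = -n+i` with `n ≥ 2` and `D ⊆ {0,…,n²}` is separated, then any two
distinct `m`-tiles with digits in `D` are disjoint. -/
theorem stmt7 (n : ℕ) (hn : 2 ≤ n) (D : Set ℕ) (hD : ∀ d ∈ D, d ≤ n ^ 2)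
    (hsep : ∀ d ∈ D, ∀ d' ∈ D, d ≠ d' → 1 < |(d : ℤ) - (d' : ℤ)|)
    (m : ℕ) (hm : 1 ≤ m) (w w' : Fin m → ℕ)
    (hw : ∀ i, w i ∈ D) (hw' : ∀ i, w' i ∈ D) (hne : w ≠ w') :
    tile n m w ∩ tile n m w' = ∅ := by
  ext z
  simp only [Set.mem_inter_iff, Set.mem_empty_iff_false, iff_false, not_and]
  rintro ⟨a, ha, haw, hza⟩ ⟨a', ha', haw', hza'⟩
  have hn1 : 1 ≤ n := by omega
  have hb0 := bb_ne n hn1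
  set b : ℂ := -(n:ℂ) + Complex.I with hbdef
  have hnormZ : ∀ z : ℤ, |z| ≤ (n:ℤ)^2 → ‖((z:ℤ):ℂ)‖ ≤ (n:ℝ)^2 := by
    intro z hz
    rw [show ((z:ℤ):ℂ) = (((z:ℤ):ℝ):ℂ) by push_cast; ring, Complex.norm_real,
        Real.norm_eq_abs, ← Int.cast_abs]
    exact_mod_cast hz
  have hnormN : ∀ t : ℕ, t ≤ n^2 → ‖((t:ℕ):ℂ)‖ ≤ (n:ℝ)^2 := by
    intro t ht
    rw [show ((t:ℕ):ℂ) = (((t:ℤ):ℤ):ℂ) by push_cast; ring]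
    apply hnormZ
    rw [abs_of_nonneg (by positivity)]
    exact_mod_cast ht
  have hA : Summable (fun k : ℕ => (a k : ℂ) * b^(-(k+1:ℤ))) :=
    summable_gen n hn1 _ (fun k => hnormN _ (ha k))
  have hA' : Summable (fun k : ℕ => (a' k : ℂ) * b^(-(k+1:ℤ))) :=
    summable_gen n hn1 _ (fun k => hnormN _ (ha' k))
  have hdsum : Summable (fun k : ℕ => ((a k : ℂ) - (a' k : ℂ)) * b^(-(k+1:ℤ))) :=
    (hA.sub hA').congr (fun k => by ring)
  have heq0 : ∑' k : ℕ, ((a k : ℂ) - (a' k : ℂ)) * b^(-(k+1:ℤ)) = 0 := by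
    have hfe : (fun k : ℕ => ((a k : ℂ) - (a' k : ℂ)) * b^(-(k+1:ℤ)))
        = fun k : ℕ => (a k : ℂ) * b^(-(k+1:ℤ)) - (a' k : ℂ) * b^(-(k+1:ℤ)) := by
      funext k; ring
    rw [hfe, Summable.tsum_sub hA hA', ← hza, ← hza', sub_self]
  have hex : ∃ k, a k ≠ a' k := by
    rw [Function.ne_iff] at hne
    obtain ⟨i, hi⟩ := hne
    exact ⟨i, fun h => hi (by rw [← haw i, ← haw' i, h])⟩
  set j := Nat.find hex with hjdef
  have hjspec : a j ≠ a' j := Nat.find_spec hex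
  have hjlt : ∀ k < j, a k = a' k := fun k hk => not_not.mp (Nat.find_min hex hk)
  have hjm : j < m := by
    rw [Function.ne_iff] at hne
    obtain ⟨i, hi⟩ := hne
    have : j ≤ (i:ℕ) := Nat.find_le (fun h => hi (by rw [← haw i, ← haw' i, h]))
    exact lt_of_le_of_lt this i.isLt
  -- remove the first j terms
  have h5 := Summable.sum_add_tsum_nat_add (f := fun k : ℕ => ((a k : ℂ) - (a' k : ℂ)) * b^(-(k+1:ℤ)))
    j hdsum
  rw [heq0] at h5
  have hrange : ∑ i ∈ Finset.range j, ((a i : ℂ) - (a' i : ℂ)) * b^(-(i+1:ℤ)) = 0 :=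
    Finset.sum_eq_zero fun i hi => by
      rw [hjlt i (Finset.mem_range.mp hi)]; ring
  rw [hrange, zero_add] at h5
  -- integer digits difference
  have hd_bound : ∀ k : ℕ, |(a (k+j) : ℤ) - (a' (k+j) : ℤ)| ≤ (n:ℤ)^2 := by
    intro k
    have h1 := ha (k+j); have h2 := ha' (k+j)
    have h1' : ((a (k+j) : ℤ)) ≤ (n:ℤ)^2 := by exact_mod_cast h1
    have h2' : ((a' (k+j) : ℤ)) ≤ (n:ℤ)^2 := by exact_mod_cast h2
    have h3' : (0:ℤ) ≤ (a (k+j) : ℤ) := Int.natCast_nonneg _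
    have h4' : (0:ℤ) ≤ (a' (k+j) : ℤ) := Int.natCast_nonneg _
    rw [abs_le]
    constructor <;> linarith
  -- factor out b^(-j)
  have hT : ∑' k : ℕ, (((a (k+j) : ℤ) - (a' (k+j) : ℤ) : ℤ) : ℂ) * b^(-(k+1:ℤ)) = 0 := by
    have hfac : ∀ k : ℕ, ((a (k+j) : ℂ) - (a' (k+j) : ℂ)) * b^(-((k+j : ℕ)+1:ℤ))
        = ((((a (k+j) : ℤ) - (a' (k+j) : ℤ) : ℤ) : ℂ) * b^(-(k+1:ℤ))) * b^(-(j:ℤ)) := by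
      intro k
      rw [mul_assoc, ← zpow_add₀ hb0]
      push_cast
      ring_nf
    rw [show (fun k : ℕ => ((a (k+j) : ℂ) - (a' (k+j) : ℂ)) * b^(-((k+j : ℕ)+1:ℤ)))
        = fun k : ℕ => ((((a (k+j) : ℤ) - (a' (k+j) : ℤ) : ℤ) : ℂ) * b^(-(k+1:ℤ))) * b^(-(j:ℤ))
      from funext hfac] at h5
    rw [tsum_mul_right] at h5
    rcases mul_eq_zero.mp h5 with h | h
    · exact h
    · exact absurd h (zpow_ne_zero _ hb0)
  -- peel the first term
  set d : ℕ → ℤ := fun k => (a (k+j) : ℤ) - (a' (k+j) : ℤ) with hddef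
  have hgsum : Summable (fun k : ℕ => ((d k : ℤ):ℂ) * b^(-(k+1:ℤ))) :=
    summable_gen n hn1 _ (fun k => hnormZ _ (hd_bound k))
  have hterm : ∀ k : ℕ, b * (((d k):ℂ) * b^(-(k+1:ℤ))) = ((d k):ℂ) * b^(-(k:ℤ)) := by
    intro k
    have hz : b * b^(-(k+1:ℤ)) = b^(-(k:ℤ)) := by
      rw [show b * b^(-(k+1:ℤ)) = b^(1:ℤ) * b^(-(k+1:ℤ)) by rw [zpow_one],
          ← zpow_add₀ hb0]
      congr 1; ring
    rw [show b * (((d k):ℂ) * b^(-(k+1:ℤ))) = ((d k):ℂ) * (b * b^(-(k+1:ℤ))) by ring, hz]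
  have h2s : Summable (fun k : ℕ => ((d k):ℂ) * b^(-(k:ℤ))) :=
    (hgsum.mul_left b).congr hterm
  have h6 : ∑' k : ℕ, ((d k):ℂ) * b^(-(k:ℤ)) = 0 := by
    calc ∑' k : ℕ, ((d k):ℂ) * b^(-(k:ℤ))
        = ∑' k : ℕ, b * (((d k):ℂ) * b^(-(k+1:ℤ))) := (tsum_congr hterm).symm
      _ = b * ∑' k : ℕ, ((d k):ℂ) * b^(-(k+1:ℤ)) := tsum_mul_left
      _ = 0 := by rw [hT, mul_zero]
  rw [Summable.tsum_eq_zero_add h2s] at h6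
  have hcast : ∑' k : ℕ, ((d (k+1)):ℂ) * b^(-((k+1:ℕ):ℤ))
      = ∑' k : ℕ, ((d (k+1)):ℂ) * b^(-(k+1:ℤ)) :=
    tsum_congr (fun k => by norm_cast)
  rw [hcast] at h6
  simp only [Nat.cast_zero, neg_zero, zpow_zero, mul_one] at h6
  -- separation gives 1 < |d 0|
  have hd0 : 1 < |d 0| := by
    have hne2 : w ⟨j, hjm⟩ ≠ w' ⟨j, hjm⟩ := by
      intro h
      apply hjspec
      have e1 := haw ⟨j,hjm⟩
      have e2 := haw' ⟨j,hjm⟩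
      rw [show ((⟨j,hjm⟩ : Fin m) : ℕ) = j from rfl] at e1 e2
      rw [e1, e2, h]
    have hs := hsep _ (hw ⟨j,hjm⟩) _ (hw' ⟨j,hjm⟩) hne2
    have e1 : a (0+j) = w ⟨j,hjm⟩ := by rw [Nat.zero_add]; exact haw ⟨j,hjm⟩
    have e2 : a' (0+j) = w' ⟨j,hjm⟩ := by rw [Nat.zero_add]; exact haw' ⟨j,hjm⟩
    rw [hddef]
    simp only []
    rw [e1, e2]
    exact hs
  rcases le_or_gt 0 (d 0) with hpos | hneg
  · have hδ : 2 ≤ d 0 := by rw [abs_of_nonneg hpos] at hd0; omega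
    apply descent n hn (d 0) hδ (fun k => -(d (k+1)))
      (fun k => by rw [abs_neg]; exact hd_bound (k+1))
    have hneq : ∑' k : ℕ, (((-(d (k+1))):ℤ):ℂ) * b^(-(k+1:ℤ))
        = -∑' k : ℕ, ((d (k+1)):ℂ) * b^(-(k+1:ℤ)) := by
      rw [← tsum_neg]
      exact tsum_congr (fun k => by push_cast; ring)
    rw [show (-(n:ℂ) + Complex.I) = b from rfl, hneq]
    linear_combination h6
  · have hδ : 2 ≤ -(d 0) := by rw [abs_of_neg hneg] at hd0; omega
    apply descent n hn (-(d 0)) hδ (fun k => d (k+1))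
      (fun k => hd_bound (k+1))
    rw [show (-(n:ℂ) + Complex.I) = b from rfl]
    push_cast
    linear_combination -h6
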